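/- arXiv:2405.09396 — 3 statements merged into one kernel-verified Lean document; each statement's English description precedes it below -/
import Mathlib

section
/- Let (x, y) be a proper factorisation of a string of O₂ of length greater than 2, with both x and y short. Then either the conjugate of the first letter of x equals the last letter of y, or the last letter of x equals the conjugate of the first letter of y, or there exist nonempty proper prefixes p of x (p ≠ x) and q of y (q ≠ y) such that pq ∈ O₂. -/
/-- A letter of the alphabet Σₙ: the `i`-th pair, with `true` for `aᵢ`
and `false` for its conjugate `āᵢ`. -/
abbrev Letter (n : ℕ) := Fin n × Bool

/-- A string (word) over Σₙ. -/
abbrev Word (n : ℕ) := List (Letter n)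

/-- The conjugate letter. -/
def conj {n : ℕ} (x : Letter n) : Letter n := (x.1, !x.2)

/-- The balance map μ : Σₙ* → ℤⁿ. -/
def mu {n : ℕ} (w : Word n) : Fin n → ℤ :=
  fun i => (w.count ((i, true) : Letter n) : ℤ) - (w.count ((i, false) : Letter n) : ℤ)

/-- The n-balanced language Oₙ. -/
def OO (n : ℕ) : Set (Word n) :=
  {w | ∀ i : Fin n, w.count ((i, true) : Letter n) = w.count ((i, false) : Letter n)}

/-- A string is short if no conjugate pair of letters both occur in it. -/
def Short {n : ℕ} (w : Word n) : Prop :=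
  ∀ i : Fin n, ¬ (((i, true) : Letter n) ∈ w ∧ ((i, false) : Letter n) ∈ w)

/-- The factor of `p` with indices from `i` to `j` (inclusive). -/
def factor {n : ℕ} (p : Word n) (i j : ℕ) : Word n :=
  (p.drop i).take (j + 1 - i)

/-- `[i, j]` is a bump of `p`: the factor `p[i..j]` is a minimal non-short factor,
i.e. it is not short but all of its ultra-proper factors are short. -/
def IsBump {n : ℕ} (p : Word n) (i j : ℕ) : Prop :=
  i < j ∧ j < p.length ∧ ¬ Short (factor p i j) ∧
    ∀ u l r : Word n, factor p i j = l ++ u ++ r → u ≠ [] → u ≠ factor p i j → Short u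

/-- Bal-decomposition of a pair `(z₀, z₁)`: choose proper factorisations of `z₀` and `z₁`,
and partition all resulting factors into two nonempty lists of length at most 2, each
concatenating to a string of O₂ of length strictly less than `|z₀z₁|`. -/
def BalDecomp (z₀ z₁ : Word 2) : Prop :=
  ∃ f₀ f₁ P Q : List (Word 2),
    f₀.flatten = z₀ ∧ [] ∉ f₀ ∧ f₁.flatten = z₁ ∧ [] ∉ f₁ ∧
    (P ++ Q).Perm (f₀ ++ f₁) ∧
    0 < P.length ∧ P.length ≤ 2 ∧ 0 < Q.length ∧ Q.length ≤ 2 ∧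
    P.flatten.length < z₀.length + z₁.length ∧ Q.flatten.length < z₀.length + z₁.length ∧
    P.flatten ∈ OO 2 ∧ Q.flatten ∈ OO 2

/-! Since `x` is short it uses a single sign `s i` on each conjugate pair `i`; balance of `x ++ y`
and shortness of `y` then force `y` to use the opposite signs. Hence `|x| = |y|`, and for prefixes
`p`, `q` of equal length, `p ++ q ∈ O₂` just says that `p` and `q` contain equally many letters of
the first pair. Along prefixes of length `t` the difference of these two counts is a walk with steps
in `{-1, 0, 1}` from `0` to `0`. Without an interior zero its first and last steps are opposite unit
steps, i.e. the first letter of `x` and the last letter of `y` (or the last letter of `x` and the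
first letter of `y`) both lie in the first pair, where they are conjugate. -/

theorem pos_of_abs_sub_le_one_of_ne_zero {f : ℕ → ℤ} {m L : ℕ}
    (hstep : ∀ t < L, |f (t + 1) - f t| ≤ 1) (hne : ∀ t, m ≤ t → t < L → f t ≠ 0)
    (hm : 0 < f m) : ∀ t, m ≤ t → t < L → 0 < f t := by
  intro t hmt htL
  induction t, hmt using Nat.le_induction with
  | base => exact hm
  | succ t hmt ih =>
    have hpos := ih (by omega)
    have hdrop := (abs_le.mp (hstep t (by omega))).1
    have := hne (t + 1) (by omega) htL
    omega

theorem first_last_steps_of_excursion {f : ℕ → ℤ} {L : ℕ} (hL : 2 ≤ L)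
    (hstep : ∀ t < L, |f (t + 1) - f t| ≤ 1) (h0 : f 0 = 0) (hL0 : f L = 0)
    (hne : ∀ t, 0 < t → t < L → f t ≠ 0) :
    (f 1 - f 0 = 1 ∧ f L - f (L - 1) = -1) ∨ (f 1 - f 0 = -1 ∧ f L - f (L - 1) = 1) := by
  have hfirst := abs_le.mp (hstep 0 (by omega))
  rw [zero_add] at hfirst
  have hlast := abs_le.mp (hstep (L - 1) (by omega))
  rw [Nat.sub_add_cancel (by omega : 1 ≤ L)] at hlast
  rcases (hne 1 one_pos (by omega)).lt_or_gt with hneg | hpos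
  · have hstep' : ∀ t < L, |-f (t + 1) - -f t| ≤ 1 := fun t ht => by
      rw [neg_sub_neg, abs_sub_comm]; exact hstep t ht
    have := pos_of_abs_sub_le_one_of_ne_zero hstep'
      (fun t h1 h2 => neg_ne_zero.mpr (hne t (by omega) h2)) (neg_pos.mpr hneg) (L - 1)
      (by omega) (by omega)
    omega
  · have := pos_of_abs_sub_le_one_of_ne_zero hstep (fun t h1 h2 => hne t (by omega) h2) hpos
      (L - 1) (by omega) (by omega)
    omega

section Words

variable {n : ℕ}

def pairCount (i : Fin n) (w : Word n) : ℕ := w.countP (fun a => a.1 = i)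

def SignedBy (s : Fin n → Bool) (w : Word n) : Prop := ∀ a ∈ w, a.2 = s a.1

theorem conj_mem_of_mem_OO {w : Word n} (hw : w ∈ OO n) {a : Letter n} (ha : a ∈ w) :
    conj a ∈ w := by
  obtain ⟨i, b⟩ := a
  have hcount := hw i
  rw [← List.count_pos_iff] at ha ⊢
  cases b <;> simp only [conj, Bool.not_true, Bool.not_false] <;> omega

@[simp]
theorem conj_conj (a : Letter n) : conj (conj a) = a := by
  simp [conj]

theorem Short.conj_not_mem {w : Word n} (hw : Short w) {a : Letter n} (ha : a ∈ w) :
    conj a ∉ w := by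
  obtain ⟨i, b⟩ := a
  cases b
  · exact fun h => hw i ⟨h, ha⟩
  · exact fun h => hw i ⟨ha, h⟩

theorem Short.signedBy {w : Word n} (hw : Short w) :
    SignedBy (fun i => decide ((i, true) ∈ w)) w := by
  rintro ⟨i, b⟩ ha
  cases b
  · simpa using fun h => hw i ⟨h, ha⟩
  · simpa using ha

theorem SignedBy.sublist {s : Fin n → Bool} {v w : Word n} (hw : SignedBy s w)
    (hvw : v.Sublist w) : SignedBy s v :=
  fun a ha => hw a (hvw.subset ha)

theorem SignedBy.conj_eq {s : Fin n → Bool} {x y : Word n} (hx : SignedBy s x)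
    (hy : SignedBy (fun i => !s i) y) {a b : Letter n} (ha : a ∈ x) (hb : b ∈ y)
    (hab : a.1 = b.1) : conj a = b :=
  Prod.ext hab (by simp [conj, hx a ha, hy b hb, hab])

theorem SignedBy.not_of_append_mem_OO {s : Fin n → Bool} {x y : Word n} (hx : SignedBy s x)
    (hy : Short y) (hxy : x ++ y ∈ OO n) : SignedBy (fun i => !s i) y := by
  intro a ha
  have hmem : conj a ∈ x :=
    (List.mem_append.mp (conj_mem_of_mem_OO hxy (List.mem_append_right x ha))).resolve_right
      (hy.conj_not_mem ha)
  have := hx _ hmem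
  simp only [conj] at this
  simp [← this]

theorem SignedBy.count_eq {s : Fin n → Bool} {w : Word n} (hw : SignedBy s w) (i : Fin n)
    (b : Bool) : w.count (i, b) = if b = s i then pairCount i w else 0 := by
  rw [List.count_eq_countP, pairCount]
  split_ifs with hb
  · refine List.countP_congr fun a ha => ?_
    have := hw a ha
    simp only [beq_iff_eq, Prod.ext_iff, decide_eq_true_eq, and_iff_left_iff_imp]
    rintro rfl
    rw [this, hb]
  · refine List.countP_eq_zero.mpr fun a ha => ?_
    have := hw a ha
    simp only [beq_iff_eq, Prod.ext_iff, not_and]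
    rintro rfl rfl
    exact hb this

theorem SignedBy.append_mem_OO_iff {s : Fin n → Bool} {p q : Word n} (hp : SignedBy s p)
    (hq : SignedBy (fun i => !s i) q) : p ++ q ∈ OO n ↔ ∀ i, pairCount i p = pairCount i q := by
  refine forall_congr' fun i => ?_
  simp only [List.count_append, hp.count_eq, hq.count_eq]
  cases s i <;> simp [eq_comm]

theorem length_eq_pairCount_zero_add_pairCount_one (w : Word 2) :
    w.length = pairCount 0 w + pairCount 1 w := by
  rw [List.length_eq_countP_add_countP (fun a => a.1 = 0), pairCount, pairCount]
  congr 1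
  refine List.countP_congr fun ⟨i, b⟩ _ => ?_
  fin_cases i <;> simp

theorem SignedBy.append_mem_OO_two {s : Fin 2 → Bool} {p q : Word 2} (hp : SignedBy s p)
    (hq : SignedBy (fun i => !s i) q) (hlen : p.length = q.length)
    (h0 : pairCount 0 p = pairCount 0 q) : p ++ q ∈ OO 2 := by
  rw [hp.append_mem_OO_iff hq]
  have hp' := length_eq_pairCount_zero_add_pairCount_one p
  have hq' := length_eq_pairCount_zero_add_pairCount_one q
  intro i
  fin_cases i
  · exact h0
  · simp only [Fin.mk_one]; omega

theorem pairCount_take_add_one (i : Fin n) {w : Word n} {t : ℕ} (ht : t < w.length) :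
    pairCount i (w.take (t + 1)) = pairCount i (w.take t) + if w[t].1 = i then 1 else 0 := by
  rw [pairCount, pairCount, List.take_succ_eq_append_getElem ht, List.countP_append,
    List.countP_singleton]
  simp only [decide_eq_true_eq]

theorem exists_pairCount_take_eq_or_head_getLast (i : Fin n) {x y : Word n} (hx : x ≠ [])
    (hy : y ≠ []) (hlen : x.length = y.length) (hL : 2 ≤ x.length)
    (hbal : pairCount i x = pairCount i y) :
    (∃ t, 0 < t ∧ t < x.length ∧ pairCount i (x.take t) = pairCount i (y.take t)) ∨
    ((x.head hx).1 = i ∧ (y.getLast hy).1 = i) ∨ ((x.getLast hx).1 = i ∧ (y.head hy).1 = i) := by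
  by_cases hmid : ∃ t, 0 < t ∧ t < x.length ∧ pairCount i (x.take t) = pairCount i (y.take t)
  · exact Or.inl hmid
  push Not at hmid
  right
  let ind : Letter n → ℤ := fun a => if a.1 = i then 1 else 0
  let f : ℕ → ℤ := fun t => pairCount i (x.take t) - pairCount i (y.take t)
  have hinc : ∀ t (htx : t < x.length) (hty : t < y.length),
      f (t + 1) - f t = ind x[t] - ind y[t] := by
    intro t htx hty
    simp only [f, pairCount_take_add_one i htx, pairCount_take_add_one i hty]
    push_cast
    ring
  have hstep : ∀ t < x.length, |f (t + 1) - f t| ≤ 1 := fun t ht => by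
    rw [hinc t ht (hlen ▸ ht)]
    simp only [ind]
    split_ifs <;> norm_num
  have h0 : f 0 = 0 := by simp [f]
  have hfL : f x.length = 0 := by
    simp only [f, List.take_of_length_le le_rfl, List.take_of_length_le hlen.ge, hbal, sub_self]
  have hne : ∀ t, 0 < t → t < x.length → f t ≠ 0 := fun t h1 h2 => by
    simpa [f, sub_eq_zero] using hmid t h1 h2
  have hfirst := hinc 0 (by omega) (by omega)
  have hlast := hinc (x.length - 1) (by omega) (by omega)
  rw [Nat.sub_add_cancel (by omega)] at hlast
  have hup : ∀ a b : Letter n, ind a - ind b = 1 → a.1 = i := fun a b h => by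
    simp only [ind] at h
    split_ifs at h <;> first | assumption | omega
  have hdown : ∀ a b : Letter n, ind a - ind b = -1 → b.1 = i := fun a b h => by
    simp only [ind] at h
    split_ifs at h <;> first | assumption | omega
  have hyl : y.getLast hy = y[x.length - 1] := by simp [List.getLast_eq_getElem, hlen]
  rw [List.head_eq_getElem hx, List.head_eq_getElem hy, List.getLast_eq_getElem hx, hyl]
  rcases first_last_steps_of_excursion hL hstep h0 hfL hne with ⟨h1, h2⟩ | ⟨h1, h2⟩
  · exact Or.inl ⟨hup _ _ (hfirst ▸ h1), hdown _ _ (hlast ▸ h2)⟩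
  · exact Or.inr ⟨hup _ _ (hlast ▸ h2), hdown _ _ (hfirst ▸ h1)⟩

end Words

theorem stmt_11 (x y : Word 2) (hx : x ≠ []) (hy : y ≠ [])
    (hbal : x ++ y ∈ OO 2) (hlen : 2 < (x ++ y).length)
    (hsx : Short x) (hsy : Short y) :
    conj (x.head hx) = y.getLast hy ∨
    x.getLast hx = conj (y.head hy) ∨
    ∃ p q : Word 2, p ≠ [] ∧ p <+: x ∧ p ≠ x ∧ q ≠ [] ∧ q <+: y ∧ q ≠ y ∧
      p ++ q ∈ OO 2 := by
  have hxs : SignedBy (fun i => decide ((i, true) ∈ x)) x := hsx.signedBy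
  have hys := hxs.not_of_append_mem_OO hsy hbal
  have hpair := (hxs.append_mem_OO_iff hys).mp hbal
  have hlen_eq : x.length = y.length := by
    rw [length_eq_pairCount_zero_add_pairCount_one x,
      length_eq_pairCount_zero_add_pairCount_one y, hpair 0, hpair 1]
  have hL : 2 ≤ x.length := by
    rw [List.length_append] at hlen
    omega
  rcases exists_pairCount_take_eq_or_head_getLast 0 hx hy hlen_eq hL (hpair 0) with
    ⟨t, ht0, htx, hbal_t⟩ | ⟨hxh, hyl⟩ | ⟨hxl, hyh⟩
  · have hbal_pq : x.take t ++ y.take t ∈ OO 2 :=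
      (hxs.sublist (List.take_sublist t x)).append_mem_OO_two
        (hys.sublist (List.take_sublist t y)) (by simp only [List.length_take]; omega) hbal_t
    refine Or.inr (Or.inr ⟨x.take t, y.take t, ?_, List.take_prefix t x, ?_, ?_,
      List.take_prefix t y, ?_, hbal_pq⟩) <;>
    · intro h
      have := congrArg List.length h
      simp only [List.length_take, List.length_nil] at this
      omega
  · exact Or.inl (hxs.conj_eq hys (List.head_mem hx) (List.getLast_mem hy) (hxh.trans hyl.symm))
  · refine Or.inr (Or.inl ?_)
    rw [← hxs.conj_eq hys (List.getLast_mem hx) (List.head_mem hy) (hxl.trans hyh.symm),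
      conj_conj]
end

section
/- If (z₀, z₁) is a proper factorisation of a string of O₂ with |z₀z₁| > 2 that admits no bal-decomposition, and all strictly smaller balanced proper pairs are bal-decomposable, then neither z₀ nor z₁ contains a bump of length 2 (a factor of the form α ᾱ with α a letter and ᾱ its conjugate). -/
lemma count_pair : ∀ (α : Letter 2) (i : Fin 2),
    List.count ((i,true) : Letter 2) [α, conj α]
      = List.count ((i,false) : Letter 2) [α, conj α] := by decide

lemma pair_mem (α : Letter 2) : [α, conj α] ∈ OO 2 := count_pair α

lemma OO_insert_iff (α : Letter 2) (u v : Word 2) :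
    u ++ α :: conj α :: v ∈ OO 2 ↔ u ++ v ∈ OO 2 := by
  constructor <;> intro hw i <;> have h1 := hw i <;> have h2 := count_pair α i <;>
    simp only [OO, Set.mem_setOf_eq, show (α :: conj α :: v) = [α, conj α] ++ v from rfl,
      List.count_append] at * <;> omega

lemma flatten_split {γ : Type*} (f : List (List γ)) (l r : List γ)
    (h : f.flatten = l ++ r) (hne : f ≠ []) :
    ∃ g t u₁ u₂, f = g ++ (u₁ ++ u₂) :: t ∧ g.flatten ++ u₁ = l ∧ u₂ ++ t.flatten = r := by
  induction f generalizing l with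
  | nil => exact absurd rfl hne
  | cons u f ih =>
    simp only [List.flatten_cons] at h
    by_cases hl : l.length ≤ u.length
    · refine ⟨[], f, l, u.drop l.length, ?_, by simp, ?_⟩
      · have hu : u = l ++ u.drop l.length := by
          have : u.take l.length = l := by
            have := congrArg (List.take l.length) h
            rwa [List.take_append_of_le_length hl, List.take_left] at this
          conv_lhs => rw [← List.take_append_drop l.length u, this]
        simp [← hu]
      · have := congrArg (List.drop l.length) h
        rwa [List.drop_append_of_le_length hl, List.drop_left] at this
    · push_neg at hl
      have hlu : l.take u.length = u := by
        have := congrArg (List.take u.length) h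
        rw [List.take_left, List.take_append_of_le_length hl.le] at this
        exact this.symm
      have hl2 : l = u ++ l.drop u.length := by
        conv_lhs => rw [← List.take_append_drop u.length l, hlu]
      have hflat : f.flatten = l.drop u.length ++ r := by
        have := h
        rw [hl2, List.append_assoc] at this
        exact (List.append_cancel_left this)
      have hfne : f ≠ [] := by
        intro hf
        subst hf
        simp at hflat
        omega
      obtain ⟨g, t, u₁, u₂, h1, h2, h3⟩ := ih (l.drop u.length) hflat hfne
      exact ⟨u :: g, t, u₁, u₂, by simp [h1], by simp [h2, ← hl2], h3⟩

lemma perm_replace {γ : Type*} {a b : γ} {s₁ s₂ t₁ t₂ : List γ}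
    (h : (s₁ ++ a :: s₂).Perm (t₁ ++ a :: t₂)) :
    (s₁ ++ b :: s₂).Perm (t₁ ++ b :: t₂) := by
  have h1 : (s₁ ++ s₂).Perm (t₁ ++ t₂) :=
    ((List.perm_middle.symm.trans h).trans List.perm_middle).cons_inv
  exact (List.perm_middle.trans (h1.cons b)).trans List.perm_middle.symm

lemma balDecomp_swap {z₀ z₁ : Word 2} (h : BalDecomp z₀ z₁) : BalDecomp z₁ z₀ := by
  obtain ⟨f₀, f₁, P, Q, hf₀, hn₀, hf₁, hn₁, hperm, hP0, hP2, hQ0, hQ2, hPl, hQl, hPO, hQO⟩ := h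
  exact ⟨f₁, f₀, P, Q, hf₁, hn₁, hf₀, hn₀, hperm.trans List.perm_append_comm,
    hP0, hP2, hQ0, hQ2, by omega, by omega, hPO, hQO⟩

lemma count_OO_replace (u₁ u₂ : Word 2) (α : Letter 2) (A B : Word 2)
    (h : A ++ (u₁ ++ u₂) ++ B ∈ OO 2) :
    A ++ (u₁ ++ α :: conj α :: u₂) ++ B ∈ OO 2 := by
  intro i
  have h1 := h i
  have h2 := count_pair α i
  simp only [OO, Set.mem_setOf_eq,
    show (α :: conj α :: u₂) = [α, conj α] ++ u₂ from rfl, List.count_append] at *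
  omega

lemma balDecomp_insert (α : Letter 2) (l r z₁ : Word 2) (hne : l ++ r ≠ [])
    (h : BalDecomp (l ++ r) z₁) :
    BalDecomp (l ++ α :: conj α :: r) z₁ := by
  obtain ⟨f₀, f₁, P, Q, hf₀, hn₀, hf₁, hn₁, hperm, hP0, hP2, hQ0, hQ2, hPl, hQl, hPO, hQO⟩ := h
  have hf₀ne : f₀ ≠ [] := by rintro rfl; simp at hf₀; exact hne (by simp [hf₀.1, hf₀.2])
  obtain ⟨g, t, u₁, u₂, hsplit, hgl, hur⟩ := flatten_split f₀ l r hf₀ hf₀ne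
  subst hsplit
  set v := u₁ ++ u₂ with hv
  set v' := u₁ ++ α :: conj α :: u₂ with hv'
  have hlen' : (l ++ α :: conj α :: r).length = (l ++ r).length + 2 := by simp; omega
  have hflat' : (g ++ v' :: t).flatten = l ++ α :: conj α :: r := by
    simp only [hv', List.flatten_append, List.flatten_cons, ← hgl, ← hur]
    simp [List.append_assoc]
  have hnotnil' : [] ∉ g ++ v' :: t := by
    simp only [List.mem_append, List.mem_cons] at hn₀ ⊢
    push_neg at hn₀ ⊢
    refine ⟨hn₀.1, ?_, hn₀.2.2⟩
    intro hc
    rw [hv'] at hc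
    have := congrArg List.length hc
    simp at this
  have hvmem : v ∈ P ++ Q := hperm.mem_iff.2 (by simp)
  rcases List.mem_append.1 hvmem with hvP | hvQ
  · obtain ⟨P₁, P₂, rfl⟩ := List.append_of_mem hvP
    refine ⟨g ++ v' :: t, f₁, P₁ ++ v' :: P₂, Q, hflat', hnotnil', hf₁, hn₁, ?_, ?_, ?_, hQ0, hQ2,
      ?_, ?_, ?_, ?_⟩
    · have hp : (P₁ ++ v :: (P₂ ++ Q)).Perm (g ++ v :: (t ++ f₁)) := by
        simpa [List.append_assoc] using hperm
      simpa [List.append_assoc] using perm_replace (b := v') hp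
    · simpa using hP0
    · simpa using hP2
    · rw [hlen']
      have : (P₁ ++ v' :: P₂).flatten.length = (P₁ ++ v :: P₂).flatten.length + 2 := by
        simp [hv, hv']; omega
      omega
    · rw [hlen']; omega
    · have := count_OO_replace u₁ u₂ α P₁.flatten P₂.flatten
        (by simpa [List.append_assoc, hv] using hPO)
      simpa [List.append_assoc, hv'] using this
    · exact hQO
  · obtain ⟨Q₁, Q₂, rfl⟩ := List.append_of_mem hvQ
    refine ⟨g ++ v' :: t, f₁, P, Q₁ ++ v' :: Q₂, hflat', hnotnil', hf₁, hn₁, ?_, hP0, hP2,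
      ?_, ?_, ?_, ?_, hPO, ?_⟩
    · have hp : ((P ++ Q₁) ++ v :: Q₂).Perm (g ++ v :: (t ++ f₁)) := by
        simpa [List.append_assoc] using hperm
      simpa [List.append_assoc] using perm_replace (b := v') hp
    · simpa using hQ0
    · simpa using hQ2
    · rw [hlen']; omega
    · rw [hlen']
      have : (Q₁ ++ v' :: Q₂).flatten.length = (Q₁ ++ v :: Q₂).flatten.length + 2 := by
        simp [hv, hv']; omega
      omega
    · have := count_OO_replace u₁ u₂ α Q₁.flatten Q₂.flatten
        (by simpa [List.append_assoc, hv] using hQO)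
      simpa [List.append_assoc, hv'] using this
theorem stmt_16 (z₀ z₁ : Word 2) (h₀ : z₀ ≠ []) (h₁ : z₁ ≠ [])
    (hbal : z₀ ++ z₁ ∈ OO 2) (hlen : 2 < (z₀ ++ z₁).length)
    (hnd : ¬ BalDecomp z₀ z₁)
    (hmin : ∀ p₀ p₁ : Word 2, p₀ ≠ [] → p₁ ≠ [] → p₀ ++ p₁ ∈ OO 2 →
      2 < (p₀ ++ p₁).length → (p₀ ++ p₁).length < (z₀ ++ z₁).length →
      BalDecomp p₀ p₁) :
    ∀ (α : Letter 2) (l r : Word 2),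
      z₀ ≠ l ++ α :: conj α :: r ∧ z₁ ≠ l ++ α :: conj α :: r := by
  intro α l r
  constructor
  · intro heq
    apply hnd
    subst heq
    have hbal' : (l ++ r) ++ z₁ ∈ OO 2 := by
      have h' : l ++ α :: conj α :: (r ++ z₁) ∈ OO 2 := by
        simpa [List.append_assoc] using hbal
      simpa [List.append_assoc] using (OO_insert_iff α l (r ++ z₁)).1 h'
    by_cases hlr : l ++ r = []
    · obtain ⟨hl, hr⟩ := List.append_eq_nil_iff.1 hlr
      subst hl; subst hr
      have hz₁ : z₁ ∈ OO 2 := by simpa using hbal'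
      have hz₁len : 0 < z₁.length := List.length_pos_iff.2 h₁
      refine ⟨[[α, conj α]], [z₁], [[α, conj α]], [z₁], by simp, by simp,
        by simp, by simpa using h₁, List.Perm.refl _,
        by simp, by simp, by simp, by simp, by simp <;> omega, by simp <;> omega,
        by simpa using pair_mem α, by simpa using hz₁⟩
    · by_cases hbig : 2 < ((l ++ r) ++ z₁).length
      · refine balDecomp_insert α l r z₁ hlr (hmin (l ++ r) z₁ hlr h₁ hbal' hbig ?_)
        simp only [List.length_append, List.length_cons]
        omega
      · have hl1 : (l ++ r).length = 1 := by
          have t1 := List.length_pos_iff.2 hlr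
          have t2 := List.length_pos_iff.2 h₁
          simp only [List.length_append] at t1 t2 hbig ⊢
          omega
        have hz1 : z₁.length = 1 := by
          have t1 := List.length_pos_iff.2 hlr
          have t2 := List.length_pos_iff.2 h₁
          simp only [List.length_append] at t1 hbig
          omega
        obtain ⟨y, rfl⟩ := List.length_eq_one_iff.1 hz1
        rcases l with _ | ⟨c, l'⟩
        · obtain ⟨x, rfl⟩ := List.length_eq_one_iff.1 (by simpa using hl1)
          refine ⟨[[α, conj α], [x]], [[y]], [[α, conj α]], [[x], [y]],
            by simp, by simp, by simp, by simp, List.Perm.refl _,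
            by simp, by simp, by simp, by simp, by simp, by simp,
            by simpa using pair_mem α, by simpa using hbal'⟩
        · have hlr' : l'.length = 0 ∧ r.length = 0 := by
            simp only [List.length_append, List.length_cons] at hl1; omega
          obtain rfl := List.length_eq_zero_iff.1 hlr'.1
          obtain rfl := List.length_eq_zero_iff.1 hlr'.2
          refine ⟨[[c], [α, conj α]], [[y]], [[α, conj α]], [[c], [y]],
            by simp, by simp, by simp, by simp, List.Perm.swap _ _ _,
            by simp, by simp, by simp, by simp, by simp, by simp,
            by simpa using pair_mem α, by simpa using hbal'⟩
  · intro heq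
    apply hnd
    subst heq
    have hbal' : z₀ ++ (l ++ r) ∈ OO 2 := by
      have h' : (z₀ ++ l) ++ α :: conj α :: r ∈ OO 2 := by
        simpa [List.append_assoc] using hbal
      simpa [List.append_assoc] using (OO_insert_iff α (z₀ ++ l) r).1 h'
    by_cases hlr : l ++ r = []
    · obtain ⟨hl, hr⟩ := List.append_eq_nil_iff.1 hlr
      subst hl; subst hr
      have hz₀ : z₀ ∈ OO 2 := by simpa using hbal'
      have hz₀len : 0 < z₀.length := List.length_pos_iff.2 h₀
      refine ⟨[z₀], [[α, conj α]], [z₀], [[α, conj α]], by simp,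
        by simpa using h₀, by simp, by simp, List.Perm.refl _,
        by simp, by simp, by simp, by simp, by simp <;> omega, by simp <;> omega,
        by simpa using hz₀, by simpa using pair_mem α⟩
    · by_cases hbig : 2 < (z₀ ++ (l ++ r)).length
      · have hsm : (z₀ ++ (l ++ r)).length < (z₀ ++ (l ++ α :: conj α :: r)).length := by
          simp only [List.length_append, List.length_cons]; omega
        exact balDecomp_swap (balDecomp_insert α l r z₀ hlr
          (balDecomp_swap (hmin z₀ (l ++ r) h₀ hlr hbal' hbig hsm)))
      · have hl1 : (l ++ r).length = 1 := by
          have t1 := List.length_pos_iff.2 hlr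
          have t2 := List.length_pos_iff.2 h₀
          simp only [List.length_append] at t1 t2 hbig ⊢
          omega
        have hz0 : z₀.length = 1 := by
          have t1 := List.length_pos_iff.2 hlr
          have t2 := List.length_pos_iff.2 h₀
          simp only [List.length_append] at t1 hbig
          omega
        obtain ⟨x, rfl⟩ := List.length_eq_one_iff.1 hz0
        rcases l with _ | ⟨c, l'⟩
        · obtain ⟨y, rfl⟩ := List.length_eq_one_iff.1 (by simpa using hl1)
          refine ⟨[[x]], [[α, conj α], [y]], [[α, conj α]], [[x], [y]],
            by simp, by simp, by simp, by simp, List.Perm.swap _ _ _,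
            by simp, by simp, by simp, by simp, by simp, by simp,
            by simpa using pair_mem α, by simpa using hbal'⟩
        · have hlr' : l'.length = 0 ∧ r.length = 0 := by
            simp only [List.length_append, List.length_cons] at hl1; omega
          obtain rfl := List.length_eq_zero_iff.1 hlr'.1
          obtain rfl := List.length_eq_zero_iff.1 hlr'.2
          refine ⟨[[x]], [[c], [α, conj α]], [[α, conj α]], [[x], [c]],
            by simp, by simp, by simp, by simp,
            by simpa using (List.perm_middle (a := [α, conj α])
              (l₁ := [[x], [c]]) (l₂ := ([] : List (Word 2)))).symm,
            by simp, by simp, by simp, by simp, by simp, by simp,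
            by simpa using pair_mem α, by simpa using hbal'⟩
end

section
/- Reversal preserves bal-decomposability: if (s₀, s₁) is a proper factorisation of a balanced string over Σ₂ that admits a bal-decomposition, then (s₀, s₁ᴿ) — with the second component reversed — also concatenates to a balanced string and admits a bal-decomposition (after reversing the corresponding factors). -/
/-
Reversing a word permutes its letters, so it changes neither its length nor its membership in
`OO n`. Split each part `P`, `Q` of a bal-decomposition of `(s₀, s₁)` into the factors of `s₀` and
those of `s₁`, and reverse the latter: the factors of `s₁`, reversed and listed in reverse order,
factorise `s₁ᴿ`, and each part keeps its number of factors, its length and its balance.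
-/

theorem mem_OO_of_perm {n : ℕ} {w w' : Word n} (h : w.Perm w') (hw : w ∈ OO n) : w' ∈ OO n :=
  fun i => by rw [← h.count_eq, ← h.count_eq]; exact hw i

theorem List.perm_flatten_map_reverse {α : Type*} (L : List (List α)) :
    (L.map List.reverse).flatten.Perm L.flatten :=
  List.Perm.flatten_congr <| List.forall₂_map_left_iff.2 <|
    List.forall₂_same.2 fun l _ => List.reverse_perm l

theorem List.Perm.flatten_append_map_reverse {α : Type*} {l x y : List (List α)}
    (h : l.Perm (x ++ y)) : (x ++ y.map List.reverse).flatten.Perm l.flatten := by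
  rw [List.flatten_append]
  exact ((List.perm_flatten_map_reverse y).append_left _).trans
    (List.flatten_append ▸ h.flatten.symm)

theorem List.Perm.exists_refinement_of_append {α : Type*} {l₁ l₂ m₁ m₂ : List α}
    (h : (l₁ ++ l₂).Perm (m₁ ++ m₂)) :
    ∃ a b c d : List α, l₁.Perm (a ++ b) ∧ l₂.Perm (c ++ d) ∧
      m₁.Perm (a ++ c) ∧ m₂.Perm (b ++ d) := by
  classical
  let a : Multiset α := ↑l₁ ∩ ↑m₁
  let b : Multiset α := ↑l₁ - a
  let c : Multiset α := ↑m₁ - a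
  let d : Multiset α := ↑m₂ - b
  have hcount : ∀ x, l₁.count x + l₂.count x = m₁.count x + m₂.count x := fun x => by
    simpa only [List.count_append] using h.count_eq x
  refine ⟨a.toList, b.toList, c.toList, d.toList, ?_, ?_, ?_, ?_⟩ <;>
  · rw [← Multiset.coe_eq_coe, ← Multiset.coe_add, Multiset.coe_toList, Multiset.coe_toList]
    ext x
    have := hcount x
    simp only [a, b, c, d, Multiset.count_add, Multiset.count_sub, Multiset.count_inter,
      Multiset.coe_count]
    omega

theorem BalDecomp.reverse_right {z₀ z₁ : Word 2} (h : BalDecomp z₀ z₁) :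
    BalDecomp z₀ z₁.reverse := by
  obtain ⟨f₀, f₁, P, Q, hf₀, hn₀, hf₁, hn₁, hperm, hP₁, hP₂, hQ₁, hQ₂, hPl, hQl, hPO, hQO⟩ := h
  obtain ⟨a, b, c, d, hP, hQ, hf₀ac, hf₁bd⟩ := hperm.exists_refinement_of_append
  have hPlen : (a ++ b.map List.reverse).length = P.length := by simp [hP.length_eq]
  have hQlen : (c ++ d.map List.reverse).length = Q.length := by simp [hQ.length_eq]
  have hPflat := hP.flatten_append_map_reverse
  have hQflat := hQ.flatten_append_map_reverse
  refine ⟨f₀, (f₁.map List.reverse).reverse, _, _, hf₀, hn₀, ?_, ?_, ?_, hPlen ▸ hP₁,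
    hPlen ▸ hP₂, hQlen ▸ hQ₁, hQlen ▸ hQ₂, ?_, ?_, mem_OO_of_perm hPflat.symm hPO,
    mem_OO_of_perm hQflat.symm hQO⟩
  · rw [← List.reverse_flatten, hf₁]
  · simpa using hn₁
  · rw [← Multiset.coe_eq_coe]
    simp only [← Multiset.coe_add, Multiset.coe_reverse, ← Multiset.map_coe,
      Multiset.coe_eq_coe.2 hf₀ac, Multiset.coe_eq_coe.2 hf₁bd, Multiset.map_add]
    abel
  · rwa [hPflat.length_eq, List.length_reverse]
  · rwa [hQflat.length_eq, List.length_reverse]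

theorem stmt_18_general (s₀ s₁ : Word 2)
    (hbal : s₀ ++ s₁ ∈ OO 2) (hbd : BalDecomp s₀ s₁) :
    s₀ ++ s₁.reverse ∈ OO 2 ∧ BalDecomp s₀ s₁.reverse :=
  ⟨mem_OO_of_perm ((List.reverse_perm s₁).append_left s₀).symm hbal, hbd.reverse_right⟩

theorem stmt_18 (s₀ s₁ : Word 2) (h₀ : s₀ ≠ []) (h₁ : s₁ ≠ [])
    (hbal : s₀ ++ s₁ ∈ OO 2) (hbd : BalDecomp s₀ s₁) :
    s₀ ++ s₁.reverse ∈ OO 2 ∧ BalDecomp s₀ s₁.reverse :=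
  stmt_18_general s₀ s₁ hbal hbd
end
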